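/- arXiv:2109.12464 — 5 statements merged into one kernel-verified Lean document; each statement's English description precedes it below -/
import Mathlib

section
/- The Wilson score interval width function w(α,n,x̄) = (2χ/(n+χ²))·√(n·x̄(1−x̄) + χ²/4), with χ > 0 fixed, satisfies: for all n > 0 and 0 ≤ x̄ ≤ 1, the partial derivative of w with respect to n is strictly negative. -/
/-! The width has the form `k / (n + c) * √(n a + b)` with `a = x̄(1 - x̄) ∈ [0, 1/4]`, `b = χ²/4`,
`c = χ²`. Its derivative in `n` has the sign of `k (a (n + c) - 2 (n a + b)) = -k (n a + χ² (1/2 - a))`,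
which is negative because `a ≤ 1/4 < 1/2`. -/

theorem mul_one_sub_nonneg {x : ℝ} (hx : x ∈ Set.Icc (0 : ℝ) 1) : 0 ≤ x * (1 - x) :=
  mul_nonneg hx.1 (sub_nonneg.mpr hx.2)

theorem mul_one_sub_le_quarter (x : ℝ) : x * (1 - x) ≤ 1 / 4 := by
  nlinarith [sq_nonneg (x - 1 / 2)]

theorem hasDerivAt_div_mul_sqrt {k c a b t : ℝ} (hc : t + c ≠ 0) (hb : 0 < t * a + b) :
    HasDerivAt (fun s => k / (s + c) * √(s * a + b))
      (k * (a * (t + c) - 2 * (t * a + b)) / (2 * (t + c) ^ 2 * √(t * a + b))) t := by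
  have hfrac : HasDerivAt (fun s => k / (s + c)) (-k / (t + c) ^ 2) t := by
    simpa [div_eq_mul_inv] using (((hasDerivAt_id t).add_const c).inv hc).const_mul k
  have hroot : HasDerivAt (fun s => √(s * a + b)) (a / (2 * √(t * a + b))) t := by
    simpa using (((hasDerivAt_id t).mul_const a).add_const b).sqrt hb.ne'
  have hsq := Real.sq_sqrt hb.le
  refine (hfrac.mul hroot).congr_deriv ?_
  field_simp
  rw [hsq]
  ring

/-- The Wilson score interval width function is strictly decreasing in the sample size `n`. -/
theorem wilson_width_deriv_n_neg (χ : ℝ) (hχ : 0 < χ) (n : ℝ) (hn : 0 < n)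
    (x : ℝ) (hx : x ∈ Set.Icc (0:ℝ) 1) :
    deriv (fun t : ℝ => 2 * χ / (t + χ ^ 2) * Real.sqrt (t * (x * (1 - x)) + χ ^ 2 / 4)) n < 0 := by
  set a := x * (1 - x)
  have ha₀ : 0 ≤ a := mul_one_sub_nonneg hx
  have ha₁ : a ≤ 1 / 4 := mul_one_sub_le_quarter x
  have hb : 0 < n * a + χ ^ 2 / 4 := by positivity
  rw [(hasDerivAt_div_mul_sqrt (by positivity) hb).deriv]
  have hnum : a * (n + χ ^ 2) - 2 * (n * a + χ ^ 2 / 4) < 0 := by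
    nlinarith [mul_nonneg ha₀ hn.le, pow_pos hχ 2]
  exact div_neg_of_neg_of_pos (mul_neg_of_pos_of_neg (by positivity) hnum)
    (by positivity)
end

section
/- The lower bound of the Wilson score interval, L(x̄) = (n·x̄ + χ²/2)/(n+χ²) − (χ/(n+χ²))·√(n·x̄(1−x̄) + χ²/4), is a strictly increasing function of x̄ on [0,1], for any fixed n > 0 and χ > 0. -/
/-!
Up to the positive factor `1 / (n + χ²)`, the Wilson lower bound is `n x + χ²/2 - χ √(q x)` with
radicand `q x = n x (1 - x) + χ²/4 ≥ χ²/4`. For `a < b` in `[0, 1]` the square roots satisfy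
`(√q b - √q a)(√q a + √q b) = q b - q a = n (b - a)(1 - a - b)` and `√q a + √q b ≥ |χ|`, hence
`|χ| |√q b - √q a| ≤ n (b - a) |1 - a - b| < n (b - a)`: the linear term always outgrows the
square-root term.
-/

open Set

noncomputable section

def wilsonRadicand (n χ x : ℝ) : ℝ := n * (x * (1 - x)) + χ ^ 2 / 4

section

variable {n χ x : ℝ}

lemma sq_div_four_le_wilsonRadicand (hn : 0 ≤ n) (hx : x ∈ Icc 0 1) :
    χ ^ 2 / 4 ≤ wilsonRadicand n χ x := by
  have : 0 ≤ x * (1 - x) := mul_nonneg hx.1 (sub_nonneg.2 hx.2)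
  unfold wilsonRadicand
  nlinarith

lemma abs_le_two_mul_sqrt_wilsonRadicand (hn : 0 ≤ n) (hx : x ∈ Icc 0 1) :
    |χ| ≤ 2 * √(wilsonRadicand n χ x) := by
  have hq := sq_div_four_le_wilsonRadicand (χ := χ) hn hx
  have : |χ| / 2 ≤ √(wilsonRadicand n χ x) :=
    (Real.le_sqrt (by positivity) (le_trans (by positivity) hq)).2
      (by rw [div_pow, sq_abs]; norm_num [hq])
  linarith

lemma wilsonRadicand_sub (n χ a b : ℝ) :
    wilsonRadicand n χ b - wilsonRadicand n χ a = n * (b - a) * (1 - a - b) := by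
  unfold wilsonRadicand
  ring

lemma abs_mul_abs_sub_sqrt_wilsonRadicand_lt {a b : ℝ} (hn : 0 < n) (ha : a ∈ Icc 0 1)
    (hb : b ∈ Icc 0 1) (hab : a < b) :
    |χ| * |√(wilsonRadicand n χ b) - √(wilsonRadicand n χ a)| < n * (b - a) := by
  set sa := √(wilsonRadicand n χ a)
  set sb := √(wilsonRadicand n χ b)
  have hsum : |χ| ≤ sa + sb := by
    linarith [abs_le_two_mul_sqrt_wilsonRadicand (χ := χ) hn.le ha,
      abs_le_two_mul_sqrt_wilsonRadicand (χ := χ) hn.le hb]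
  have hsa : sa ^ 2 = wilsonRadicand n χ a :=
    Real.sq_sqrt (le_trans (by positivity) (sq_div_four_le_wilsonRadicand hn.le ha))
  have hsb : sb ^ 2 = wilsonRadicand n χ b :=
    Real.sq_sqrt (le_trans (by positivity) (sq_div_four_le_wilsonRadicand hn.le hb))
  have hgap : 0 < n * (b - a) := mul_pos hn (sub_pos.2 hab)
  have hmid : |1 - a - b| < 1 := abs_lt.2 ⟨by linarith [ha.2, hb.2], by linarith [ha.1]⟩
  calc |χ| * |sb - sa|
      ≤ (sa + sb) * |sb - sa| := mul_le_mul_of_nonneg_right hsum (abs_nonneg _)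
    _ = |sb ^ 2 - sa ^ 2| := by
        rw [show sb ^ 2 - sa ^ 2 = (sa + sb) * (sb - sa) by ring, abs_mul,
          abs_of_nonneg (add_nonneg (Real.sqrt_nonneg _) (Real.sqrt_nonneg _))]
    _ = n * (b - a) * |1 - a - b| := by
        rw [hsa, hsb, wilsonRadicand_sub, abs_mul, abs_of_pos hgap]
    _ < n * (b - a) := mul_lt_of_lt_one_right hgap hmid

end

end

theorem wilson_lower_strictMono_general (n χ : ℝ) (hn : 0 < n) :
    StrictMonoOn
      (fun x : ℝ => (n * x + χ ^ 2 / 2) / (n + χ ^ 2) -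
        χ / (n + χ ^ 2) * Real.sqrt (n * (x * (1 - x)) + χ ^ 2 / 4))
      (Set.Icc 0 1) := by
  intro a ha b hb hab
  have key := abs_mul_abs_sub_sqrt_wilsonRadicand_lt (χ := χ) hn ha hb hab
  rw [← abs_mul] at key
  have hsqrt := (le_abs_self _).trans_lt key
  have hform : ∀ x, (n * x + χ ^ 2 / 2) / (n + χ ^ 2) -
      χ / (n + χ ^ 2) * √(n * (x * (1 - x)) + χ ^ 2 / 4) =
      (n * x + χ ^ 2 / 2 - χ * √(wilsonRadicand n χ x)) / (n + χ ^ 2) := fun x => by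
    unfold wilsonRadicand
    ring
  simp only [hform]
  exact div_lt_div_of_pos_right (by linarith) (by positivity)

/-- The lower bound of the Wilson score interval is strictly increasing in the sample proportion. -/
theorem wilson_lower_strictMono (n χ : ℝ) (hn : 0 < n) (hχ : 0 < χ) :
    StrictMonoOn
      (fun x : ℝ => (n * x + χ ^ 2 / 2) / (n + χ ^ 2) -
        χ / (n + χ ^ 2) * Real.sqrt (n * (x * (1 - x)) + χ ^ 2 / 4))
      (Set.Icc 0 1) :=
  wilson_lower_strictMono_general n χ hn
end

section
/- The upper bound of the Wilson score interval, U(x̄) = (n·x̄ + χ²/2)/(n+χ²) + (χ/(n+χ²))·√(n·x̄(1−x̄) + χ²/4), is a strictly increasing function of x̄ on [0,1], for any fixed n > 0 and χ > 0. -/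
/-- The upper bound of the Wilson score interval is strictly increasing in the sample proportion. -/
theorem wilson_upper_strictMono (n χ : ℝ) (hn : 0 < n) (hχ : 0 < χ) :
    StrictMonoOn
      (fun x : ℝ => (n * x + χ ^ 2 / 2) / (n + χ ^ 2) +
        χ / (n + χ ^ 2) * Real.sqrt (n * (x * (1 - x)) + χ ^ 2 / 4))
      (Set.Icc 0 1) := by
  intro a ha b hb hab
  obtain ⟨ha0, ha1⟩ := ha
  obtain ⟨hb0, hb1⟩ := hb
  have hD : 0 < n + χ ^ 2 := by positivity
  have hqa0 : 0 ≤ n * (a * (1 - a)) + χ ^ 2 / 4 := by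
    nlinarith [mul_nonneg ha0 (by linarith : (0:ℝ) ≤ 1 - a)]
  have hqb0 : 0 ≤ n * (b * (1 - b)) + χ ^ 2 / 4 := by
    nlinarith [mul_nonneg hb0 (by linarith : (0:ℝ) ≤ 1 - b)]
  set sa := Real.sqrt (n * (a * (1 - a)) + χ ^ 2 / 4) with hsa
  set sb := Real.sqrt (n * (b * (1 - b)) + χ ^ 2 / 4) with hsb
  have hsa2 : sa ^ 2 = n * (a * (1 - a)) + χ ^ 2 / 4 := Real.sq_sqrt hqa0
  have hsb2 : sb ^ 2 = n * (b * (1 - b)) + χ ^ 2 / 4 := Real.sq_sqrt hqb0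
  have hsa0 : 0 ≤ sa := Real.sqrt_nonneg _
  have hsb0 : 0 ≤ sb := Real.sqrt_nonneg _
  have hhalf : Real.sqrt (χ ^ 2 / 4) = χ / 2 := by
    rw [show χ ^ 2 / 4 = (χ / 2) ^ 2 by ring, Real.sqrt_sq (by positivity)]
  have hsal : χ / 2 ≤ sa := by
    rw [hsa, ← hhalf]
    exact Real.sqrt_le_sqrt
      (by nlinarith [mul_nonneg ha0 (by linarith : (0:ℝ) ≤ 1 - a)])
  have hsbl : χ / 2 ≤ sb := by
    rw [hsb, ← hhalf]
    exact Real.sqrt_le_sqrt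
      (by nlinarith [mul_nonneg hb0 (by linarith : (0:ℝ) ≤ 1 - b)])
  have hkey : χ * (sa - sb) < n * (b - a) := by
    have hS : 0 < sa + sb := by linarith
    have hba : 0 < n * (b - a) := mul_pos hn (sub_pos.mpr hab)
    have hdiff : (sa - sb) * (sa + sb) = n * (b - a) * (a + b - 1) := by
      linear_combination hsa2 - hsb2
    have h2 : χ * (a + b - 1) < sa + sb := by
      nlinarith [mul_pos hχ (show (0:ℝ) < 2 - (a + b) by linarith)]
    have h3 : n * (b - a) * (χ * (a + b - 1)) < n * (b - a) * (sa + sb) :=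
      mul_lt_mul_of_pos_left h2 hba
    nlinarith [hdiff, h3, hS, mul_pos hba hS]
  have hfin : χ * (sa - sb) / (n + χ ^ 2) < n * (b - a) / (n + χ ^ 2) :=
    div_lt_div_of_pos_right hkey hD
  show (n * a + χ ^ 2 / 2) / (n + χ ^ 2) + χ / (n + χ ^ 2) * sa <
      (n * b + χ ^ 2 / 2) / (n + χ ^ 2) + χ / (n + χ ^ 2) * sb
  have e1 : χ / (n + χ ^ 2) * sa - χ / (n + χ ^ 2) * sb
      = χ * (sa - sb) / (n + χ ^ 2) := by ring
  have e2 : (n * b + χ ^ 2 / 2) / (n + χ ^ 2) - (n * a + χ ^ 2 / 2) / (n + χ ^ 2)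
      = n * (b - a) / (n + χ ^ 2) := by ring
  linarith
end

section
/- For all n ≥ 0, χ ≥ 0 and x̄ ∈ [0,1], the Wilson interval bounds satisfy 0 ≤ L(x̄) ≤ U(x̄) ≤ 1, i.e. the Wilson score interval is always contained in [0,1]. -/
/-- The Wilson score interval is always contained in `[0, 1]`. -/
theorem wilson_interval_subset_unit (n χ x : ℝ) (hn : 0 ≤ n) (hχ : 0 ≤ χ)
    (hpos : 0 < n + χ ^ 2) (hx : x ∈ Set.Icc (0:ℝ) 1) :
    0 ≤ (n * x + χ ^ 2 / 2) / (n + χ ^ 2) -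
        χ / (n + χ ^ 2) * Real.sqrt (n * (x * (1 - x)) + χ ^ 2 / 4) ∧
    (n * x + χ ^ 2 / 2) / (n + χ ^ 2) -
        χ / (n + χ ^ 2) * Real.sqrt (n * (x * (1 - x)) + χ ^ 2 / 4) ≤
      (n * x + χ ^ 2 / 2) / (n + χ ^ 2) +
        χ / (n + χ ^ 2) * Real.sqrt (n * (x * (1 - x)) + χ ^ 2 / 4) ∧
    (n * x + χ ^ 2 / 2) / (n + χ ^ 2) +
        χ / (n + χ ^ 2) * Real.sqrt (n * (x * (1 - x)) + χ ^ 2 / 4) ≤ 1 := by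
  obtain ⟨hx0, hx1⟩ := hx
  have hE : (0:ℝ) ≤ n * (x * (1 - x)) + χ ^ 2 / 4 := by
    nlinarith [mul_nonneg hn (mul_nonneg hx0 (sub_nonneg.mpr hx1)), sq_nonneg χ]
  have hs2 : Real.sqrt (n * (x * (1 - x)) + χ ^ 2 / 4) ^ 2
      = n * (x * (1 - x)) + χ ^ 2 / 4 := Real.sq_sqrt hE
  have hsnn : 0 ≤ Real.sqrt (n * (x * (1 - x)) + χ ^ 2 / 4) := Real.sqrt_nonneg _
  have key1 : χ * Real.sqrt (n * (x * (1 - x)) + χ ^ 2 / 4) ≤ n * x + χ ^ 2 / 2 := by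
    nlinarith [mul_nonneg hχ hsnn, sq_nonneg (n * x), mul_nonneg hn hx0,
      sq_nonneg (χ * Real.sqrt (n * (x * (1 - x)) + χ ^ 2 / 4) - (n * x + χ ^ 2 / 2)),
      mul_nonneg (mul_nonneg hn hx0) hx0]
  have key2 : n * x + χ ^ 2 / 2 + χ * Real.sqrt (n * (x * (1 - x)) + χ ^ 2 / 4)
      ≤ n + χ ^ 2 := by
    nlinarith [mul_nonneg hχ hsnn,
      sq_nonneg (χ * Real.sqrt (n * (x * (1 - x)) + χ ^ 2 / 4) - (n * (1 - x) + χ ^ 2 / 2)),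
      mul_nonneg (mul_nonneg hn (by linarith : 0 ≤ 1 - x)) (by linarith : 0 ≤ 1 - x)]
  refine ⟨?_, ?_, ?_⟩
  · rw [sub_nonneg]
    calc χ / (n + χ ^ 2) * Real.sqrt (n * (x * (1 - x)) + χ ^ 2 / 4)
        = (χ * Real.sqrt (n * (x * (1 - x)) + χ ^ 2 / 4)) / (n + χ ^ 2) := by ring
      _ ≤ (n * x + χ ^ 2 / 2) / (n + χ ^ 2) := div_le_div_of_nonneg_right key1 hpos.le
  · have : 0 ≤ χ / (n + χ ^ 2) * Real.sqrt (n * (x * (1 - x)) + χ ^ 2 / 4) :=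
      mul_nonneg (div_nonneg hχ hpos.le) hsnn
    linarith
  · calc (n * x + χ ^ 2 / 2) / (n + χ ^ 2)
          + χ / (n + χ ^ 2) * Real.sqrt (n * (x * (1 - x)) + χ ^ 2 / 4)
        = (n * x + χ ^ 2 / 2 + χ * Real.sqrt (n * (x * (1 - x)) + χ ^ 2 / 4))
            / (n + χ ^ 2) := by ring
      _ ≤ (n + χ ^ 2) / (n + χ ^ 2) := div_le_div_of_nonneg_right key2 hpos.le
      _ = 1 := div_self hpos.ne'
end

section
/- For 0 < w < 1 and χ > 0 fixed, the required sample size n̂, viewed as a function of z = x̄(1−x̄) ∈ [0, 1/4] and given by n̂ = (χ²/w²)·[√(w² − 4zw² + 4z²) − w² + 2z], is monotonically increasing in z. -/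
/-- The required sample size, as a function of `z = x̄(1-x̄)`, is monotonically increasing
on `[0, 1/4]`. -/
theorem required_sample_size_mono (w χ : ℝ) (hw0 : 0 < w) (hw1 : w < 1) (hχ : 0 < χ) :
    StrictMonoOn
      (fun z : ℝ => χ ^ 2 / w ^ 2 *
        (Real.sqrt (w ^ 2 - 4 * z * w ^ 2 + 4 * z ^ 2) - w ^ 2 + 2 * z))
      (Set.Icc 0 (1/4)) := by
  intro z1 _ z2 _ hlt
  have hc : 0 < χ ^ 2 / w ^ 2 := by positivity
  have hpos : 0 < w ^ 2 * (1 - w ^ 2) := mul_pos (pow_pos hw0 2) (by nlinarith)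
  have hE : ∀ z : ℝ, 0 ≤ w ^ 2 - 4 * z * w ^ 2 + 4 * z ^ 2 := by
    intro z
    nlinarith [sq_nonneg (2 * z - w ^ 2), hpos]
  set s1 := Real.sqrt (w ^ 2 - 4 * z1 * w ^ 2 + 4 * z1 ^ 2) with hs1
  set s2 := Real.sqrt (w ^ 2 - 4 * z2 * w ^ 2 + 4 * z2 ^ 2) with hs2
  have hs1n : 0 ≤ s1 := Real.sqrt_nonneg _
  have hs2n : 0 ≤ s2 := Real.sqrt_nonneg _
  have hs1sq : s1 ^ 2 = w ^ 2 - 4 * z1 * w ^ 2 + 4 * z1 ^ 2 := Real.sq_sqrt (hE z1)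
  have hs2sq : s2 ^ 2 = w ^ 2 - 4 * z2 * w ^ 2 + 4 * z2 ^ 2 := Real.sq_sqrt (hE z2)
  -- s2 > w^2 - 2*z2
  have hkey : w ^ 2 - 2 * z2 < s2 := by
    by_contra h
    push_neg at h
    nlinarith [hpos, mul_le_mul_of_nonneg_left h hs2n, mul_le_mul_of_nonneg_right h hs2n]
  have hinner : s1 - w ^ 2 + 2 * z1 < s2 - w ^ 2 + 2 * z2 := by
    nlinarith [mul_pos (sub_pos.mpr hlt) (sub_pos.mpr hkey), sq_nonneg (s1 - s2)]
  simp only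
  exact mul_lt_mul_of_pos_left hinner hc
end
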